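/- arXiv:2302.14262 — 3 statements merged into one kernel-verified Lean document; each statement's English description precedes it below -/
import Mathlib

section
/- Let n = (n₁, n₂) ∈ ℝ² be a unit vector, γ > 1, λ ∈ ℝ, and u = (ρ, m₁, m₂, E) ∈ ℝ⁴ with ρ > 0. The Lax–Friedrichs numerical flux evaluated at the mirror-reflected boundary pair, H = (1/2)(n·F(u) + n·F(Γ_M(u))) + (λ/2)(u − Γ_M(u)), has the pure normal-pressure structure H = (0, P̃ n₁, P̃ n₂, 0), where P̃ = p(u) + (m·n)²/ρ + λ(m·n). -/
/-- Pressure `p(u) = (γ−1)(E − (m₁² + m₂²)/(2ρ))`. -/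
noncomputable def pressure (γ : ℝ) (u : Fin 4 → ℝ) : ℝ :=
  (γ - 1) * (u 3 - (u 1 ^ 2 + u 2 ^ 2) / (2 * u 0))

/-- The normal Euler flux `n·F(u)`. -/
noncomputable def normalFlux (γ n₁ n₂ : ℝ) (u : Fin 4 → ℝ) : Fin 4 → ℝ :=
  ![u 1 * n₁ + u 2 * n₂,
    (u 1 / u 0) * (u 1 * n₁ + u 2 * n₂) + pressure γ u * n₁,
    (u 2 / u 0) * (u 1 * n₁ + u 2 * n₂) + pressure γ u * n₂,
    ((u 3 + pressure γ u) / u 0) * (u 1 * n₁ + u 2 * n₂)]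

/-- The mirror-reflection boundary operator `Γ_M(u) = (ρ, m − 2(m·n)n, E)`. -/
def mirrorRefl (n₁ n₂ : ℝ) (u : Fin 4 → ℝ) : Fin 4 → ℝ :=
  ![u 0,
    u 1 - 2 * (u 1 * n₁ + u 2 * n₂) * n₁,
    u 2 - 2 * (u 1 * n₁ + u 2 * n₂) * n₂,
    u 3]

/-- The Lax–Friedrichs numerical flux with dissipation parameter `λ`:
`H(u, v, n) = (1/2)(n·F(u) + n·F(v)) + (λ/2)(u − v)`. -/
noncomputable def laxFriedrichs (γ n₁ n₂ lam : ℝ) (u v : Fin 4 → ℝ) : Fin 4 → ℝ :=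
  (1 / 2 : ℝ) • (normalFlux γ n₁ n₂ u + normalFlux γ n₁ n₂ v) +
    (lam / 2 : ℝ) • (u - v)

/-! A mirror reflection flips the sign of the normal momentum `m·n` but keeps `ρ`, `E` and `|m|`,
hence the pressure. In the averaged flux the mass and energy components therefore cancel, while
in the momentum components the reflected and incident parts combine with the dissipation
`λ(u − Γ_M u) = (0, 2λ(m·n)n, 0)` into a multiple of `n`. -/

section mirror

variable {n₁ n₂ : ℝ}

lemma mirrorRefl_zero (u : Fin 4 → ℝ) : mirrorRefl n₁ n₂ u 0 = u 0 := rfl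

lemma mirrorRefl_one (u : Fin 4 → ℝ) :
    mirrorRefl n₁ n₂ u 1 = u 1 - 2 * (u 1 * n₁ + u 2 * n₂) * n₁ := rfl

lemma mirrorRefl_two (u : Fin 4 → ℝ) :
    mirrorRefl n₁ n₂ u 2 = u 2 - 2 * (u 1 * n₁ + u 2 * n₂) * n₂ := rfl

lemma mirrorRefl_three (u : Fin 4 → ℝ) : mirrorRefl n₁ n₂ u 3 = u 3 := rfl

lemma mirrorRefl_normal (hn : n₁ ^ 2 + n₂ ^ 2 = 1) (u : Fin 4 → ℝ) :
    mirrorRefl n₁ n₂ u 1 * n₁ + mirrorRefl n₁ n₂ u 2 * n₂ = -(u 1 * n₁ + u 2 * n₂) := by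
  rw [mirrorRefl_one, mirrorRefl_two]
  linear_combination (-2 * (u 1 * n₁ + u 2 * n₂)) * hn

lemma mirrorRefl_momentum_sq (hn : n₁ ^ 2 + n₂ ^ 2 = 1) (u : Fin 4 → ℝ) :
    mirrorRefl n₁ n₂ u 1 ^ 2 + mirrorRefl n₁ n₂ u 2 ^ 2 = u 1 ^ 2 + u 2 ^ 2 := by
  rw [mirrorRefl_one, mirrorRefl_two]
  linear_combination 4 * (u 1 * n₁ + u 2 * n₂) ^ 2 * hn

lemma pressure_mirrorRefl (γ : ℝ) (hn : n₁ ^ 2 + n₂ ^ 2 = 1) (u : Fin 4 → ℝ) :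
    pressure γ (mirrorRefl n₁ n₂ u) = pressure γ u := by
  rw [pressure, mirrorRefl_momentum_sq hn, mirrorRefl_zero, mirrorRefl_three, pressure]

end mirror

theorem laxFriedrichs_mirror_general (n₁ n₂ γ lam : ℝ) (hn : n₁ ^ 2 + n₂ ^ 2 = 1)
    (u : Fin 4 → ℝ) :
    laxFriedrichs γ n₁ n₂ lam u (mirrorRefl n₁ n₂ u) =
      ![0,
        (pressure γ u + (u 1 * n₁ + u 2 * n₂) ^ 2 / u 0 +
          lam * (u 1 * n₁ + u 2 * n₂)) * n₁,
        (pressure γ u + (u 1 * n₁ + u 2 * n₂) ^ 2 / u 0 +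
          lam * (u 1 * n₁ + u 2 * n₂)) * n₂,
        0] := by
  ext i
  fin_cases i <;>
    simp only [laxFriedrichs, normalFlux, Pi.add_apply, Pi.smul_apply, Pi.sub_apply, smul_eq_mul,
      Fin.reduceFinMk, Fin.isValue, Matrix.cons_val, mirrorRefl_normal hn,
      pressure_mirrorRefl γ hn, mirrorRefl_zero, mirrorRefl_three]
  · ring
  · rw [mirrorRefl_one]; ring
  · rw [mirrorRefl_two]; ring
  · ring

/-- For a unit vector `n`, `γ > 1`, `λ ∈ ℝ`, and a state `u` with
`ρ > 0`, the Lax–Friedrichs flux at the mirror-reflected boundary pair has the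
pure normal-pressure structure `H = (0, P̃n₁, P̃n₂, 0)` with
`P̃ = p(u) + (m·n)²/ρ + λ(m·n)`. -/
theorem laxFriedrichs_mirror (n₁ n₂ γ lam : ℝ) (hn : n₁ ^ 2 + n₂ ^ 2 = 1)
    (hγ : 1 < γ) (u : Fin 4 → ℝ) (hρ : 0 < u 0) :
    laxFriedrichs γ n₁ n₂ lam u (mirrorRefl n₁ n₂ u) =
      ![0,
        (pressure γ u + (u 1 * n₁ + u 2 * n₂) ^ 2 / u 0 +
          lam * (u 1 * n₁ + u 2 * n₂)) * n₁,
        (pressure γ u + (u 1 * n₁ + u 2 * n₂) ^ 2 / u 0 +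
          lam * (u 1 * n₁ + u 2 * n₂)) * n₂,
        0] :=
  laxFriedrichs_mirror_general n₁ n₂ γ lam hn u
end

section
/- Let A be an n×n real matrix, q : ℝⁿ × ℝⁿ → ℝⁿ a symmetric bilinear map, b, c ∈ ℝⁿ, and define the quadratic residual R(x) = Ax + (1/2) q(x, x) − b, whose Jacobian at v is the linear map R′(v)h = Ah + q(v, h). Suppose u ∈ ℝⁿ satisfies R(u) = 0 and z ∈ ℝⁿ satisfies the discrete dual equation R′(v)ᵀ z = c for a fixed linearization point v ∈ ℝⁿ. Then for every approximate dual vector w ∈ ℝⁿ, the duality gap satisfies (z − w)·R(v) − (R′(v)ᵀw − c)·(u − v) = (1/2) (w − z)·q(u − v, u − v); in particular the duality gap is quadratic in the primal error u − v and linear in the dual error w − z. -/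
open Matrix

/-- For a quadratic residual `R(x) = Ax + (1/2)q(x,x) − b` with
`q` symmetric bilinear, Jacobian `R′(v)h = Ah + q(v,h)`, primal solution `u`
with `R(u) = 0`, and discrete dual solution `z` with `R′(v)ᵀz = c` (i.e.,
`z·(R′(v)h) = c·h` for all `h`), the duality gap satisfies, for every
approximate dual vector `w`,
`(z − w)·R(v) − (R′(v)ᵀw − c)·(u − v) = (1/2)(w − z)·q(u − v, u − v)`. -/
theorem duality_gap_quadratic {n : ℕ} (A : Matrix (Fin n) (Fin n) ℝ)
    (q : (Fin n → ℝ) →ₗ[ℝ] (Fin n → ℝ) →ₗ[ℝ] (Fin n → ℝ))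
    (hq : ∀ x y : Fin n → ℝ, q x y = q y x)
    (b c u v z : Fin n → ℝ)
    (R : (Fin n → ℝ) → (Fin n → ℝ))
    (hR : ∀ x : Fin n → ℝ, R x = A *ᵥ x + (1 / 2 : ℝ) • q x x - b)
    (hu : R u = 0)
    (hz : ∀ h : Fin n → ℝ, z ⬝ᵥ (A *ᵥ h + q v h) = c ⬝ᵥ h) :
    ∀ w : Fin n → ℝ,
      (z - w) ⬝ᵥ R v - (w ⬝ᵥ (A *ᵥ (u - v) + q v (u - v)) - c ⬝ᵥ (u - v)) =
        (1 / 2 : ℝ) * ((w - z) ⬝ᵥ q (u - v) (u - v)) := by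
  intro w
  set e : Fin n → ℝ := u - v with he
  have hue : u = v + e := by simp [he]
  have hb : b = A *ᵥ u + (1 / 2 : ℝ) • q u u := by
    have h0 : A *ᵥ u + (1 / 2 : ℝ) • q u u - b = 0 := by rw [← hR]; exact hu
    exact (sub_eq_zero.mp h0).symm
  have hRv : R v = -(A *ᵥ e + q v e) - (1 / 2 : ℝ) • q e e := by
    rw [hR, hb, hue]
    simp only [mulVec_add, map_add, LinearMap.add_apply, hq e v]
    module
  rw [hRv]
  have hze := hz e
  simp only [sub_dotProduct, dotProduct_sub, dotProduct_neg, dotProduct_add,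
    dotProduct_smul, smul_eq_mul] at *
  ring_nf
  ring_nf at hze
  linarith
end

section
/- Let A be an n×n real matrix, q : ℝⁿ × ℝⁿ → ℝⁿ a symmetric bilinear map, b, c ∈ ℝⁿ, and define the quadratic residual R(x) = Ax + (1/2) q(x, x) − b with Jacobian R′(v)h = Ah + q(v, h). Suppose u ∈ ℝⁿ satisfies R(u) = 0 and z ∈ ℝⁿ satisfies R′(v)ᵀ z = c for a fixed v ∈ ℝⁿ. Then the dual-weighted residual estimate of the quantity of interest, J_est = c·v − z·R(v), satisfies c·u − J_est = −(1/2) z·q(u − v, u − v); i.e., the estimate's error is quadratic in the primal error u − v, so the DWR-corrected functional is second-order accurate. -/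
open Matrix

/-- For a quadratic residual `R(x) = Ax + (1/2)q(x,x) − b` with
`q` symmetric bilinear, Jacobian `R′(v)h = Ah + q(v,h)`, primal solution `u`
with `R(u) = 0`, and discrete dual solution `z` with `R′(v)ᵀz = c` (i.e.,
`z·(R′(v)h) = c·h` for all `h`), the dual-weighted residual estimate
`J_est = c·v − z·R(v)` satisfies `c·u − J_est = −(1/2)z·q(u − v, u − v)`:
the DWR-corrected functional is second-order accurate in the primal error. -/
theorem dwr_estimate_second_order {n : ℕ} (A : Matrix (Fin n) (Fin n) ℝ)
    (q : (Fin n → ℝ) →ₗ[ℝ] (Fin n → ℝ) →ₗ[ℝ] (Fin n → ℝ))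
    (hq : ∀ x y : Fin n → ℝ, q x y = q y x)
    (b c u v z : Fin n → ℝ)
    (R : (Fin n → ℝ) → (Fin n → ℝ))
    (hR : ∀ x : Fin n → ℝ, R x = A *ᵥ x + (1 / 2 : ℝ) • q x x - b)
    (hu : R u = 0)
    (hz : ∀ h : Fin n → ℝ, z ⬝ᵥ (A *ᵥ h + q v h) = c ⬝ᵥ h) :
    c ⬝ᵥ u - (c ⬝ᵥ v - z ⬝ᵥ R v) =
      -(1 / 2 : ℝ) * (z ⬝ᵥ q (u - v) (u - v)) := by
  have h0 : z ⬝ᵥ (A *ᵥ u + (1 / 2 : ℝ) • q u u - b) = 0 := by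
    rw [← hR u, hu, dotProduct_zero]
  have hz1 := hz (u - v)
  rw [hR v]
  simp only [Matrix.mulVec_sub, map_sub, LinearMap.sub_apply, dotProduct_sub,
    dotProduct_add, dotProduct_smul, smul_eq_mul, hq v u] at *
  linear_combination h0 - hz1
end
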